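/- Let p be an odd prime, n a positive integer, and m ≥ 1. Then: (i) Σ_{h=0}^{m} (−1)^{h−1}·C(m,h)·b_m(2h,0) = −(2n)^m; (ii) Σ_{h=0}^{m} (−1)^{h−1}·C(m,h)·b_{m+1}(2h,0) = (2n)^{m+1}·P_1(m); (iii) Σ_{h=0}^{m} (−1)^{h−1}·C(m,h)·b_{m+2}(2h,0) = −( (2n)^{m+2}·P_2(m) + (2n)^m·m·α_p(3) ). -/

import Mathlib

open Finset

/-- σ₁, the sum-of-divisors function. -/
def sigma1 (k : ℕ) : ℕ := ∑ d ∈ k.divisors, d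

/-- The term σ₁(k/d)/(k/d), taken to be 0 unless d divides k. -/
noncomputable def sigmaTerm (k d : ℕ) : ℚ :=
  if d ∣ k then (sigma1 (k / d) : ℚ) / (k / d) else 0

/-- α_p(k) = σ₁(k)/k − 3σ₁(k/2)/(k/2) + 2σ₁(k/4)/(k/4) + σ₁(k/p)/(k/p)
      − 3σ₁(k/(2p))/(k/(2p)) + 2σ₁(k/(4p))/(k/(4p)). -/
noncomputable def alphaP (p k : ℕ) : ℚ :=
  sigmaTerm k 1 - 3 * sigmaTerm k 2 + 2 * sigmaTerm k 4
    + sigmaTerm k p - 3 * sigmaTerm k (2 * p) + 2 * sigmaTerm k (4 * p)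

/-- The multiplicity j_k of the part k in the partition J. -/
def mult {N : ℕ} (J : N.Partition) (k : ℕ) : ℕ := Multiset.count k J.parts

/-- |J| = Σ_k j_k. -/
def normJ {N : ℕ} (J : N.Partition) : ℕ := Multiset.card J.parts

/-- J_o = Σ_{k odd} j_k. -/
def oddJ {N : ℕ} (J : N.Partition) : ℕ := Multiset.card (J.parts.filter Odd)

/-- J_e = Σ_{k even} j_k. -/
def evenJ {N : ℕ} (J : N.Partition) : ℕ := Multiset.card (J.parts.filter Even)

/-- W_p(J) = Π_{k≥1} α_p(k)^{j_k}/j_k!  (the factors with j_k = 0 are 1). -/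
noncomputable def Wp (p : ℕ) {N : ℕ} (J : N.Partition) : ℚ :=
  ∏ k ∈ J.parts.toFinset, alphaP p k ^ mult J k / (Nat.factorial (mult J k))

/-- b_l(u,v) = Σ_{J ∈ J[l]} (−n)^{|J|} u^{J_o} v^{J_e} W_p(J). -/
noncomputable def bP (p n l : ℕ) (u v : ℚ) : ℚ :=
  ∑ J : l.Partition, (-(n : ℚ)) ^ normJ J * u ^ oddJ J * v ^ evenJ J * Wp p J

/-- P_r(m), defined by P_0(m) = 1, P_r(0) = 0 for r ≥ 1, and
    (r+m)·P_r(m) = m·(P_{r−1}(m) + P_r(m−1)) for r, m ≥ 1. -/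
def Ppoly : ℕ → ℕ → ℚ
  | 0, _ => 1
  | _ + 1, 0 => 0
  | r + 1, m + 1 =>
      ((m : ℚ) + 1) * (Ppoly r (m + 1) + Ppoly (r + 1) m) / ((r : ℚ) + 1 + ((m : ℚ) + 1))

/-!
With `v = 0` only partitions into odd parts survive in `b_l(2h, 0)`, and for those
`J_o = |J| ≡ l (mod 2)`. Exchanging the two sums turns the sum over `h` into
`Σ_h (-1)^h C(m,h) h^|J| = (-1)^m m! S(|J|, m)`, with `S` the Stirling numbers of the second
kind, which vanish for `|J| < m`. For `l ≤ m + 2` the only partitions of `l` into odd parts with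
at least `m` parts are `1^l` and `3·1^(l-3)`, so the three identities reduce to
`S(m, m) = 1`, `S(m+1, m) = C(m+1, 2)` and `S(m+2, m) = m(m+1)(m+2)(3m+1)/24`.
-/

open Nat

theorem mul_succ_choose_eq_succ_mul_sub {R : Type*} [CommRing R] (m h : ℕ) (hh : h ≤ m + 1) :
    (h : R) * (m + 1).choose h = (m + 1) * ((m + 1).choose h - m.choose h) := by
  have key : ((m.choose h * (m + 1) : ℕ) : R) = ((m + 1).choose h * (m + 1 - h) : ℕ) :=
    congrArg Nat.cast (Nat.choose_mul_succ_eq m h)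
  push_cast [Nat.cast_sub hh] at key
  linear_combination key

theorem sum_range_neg_one_pow_mul_choose_mul_pow {R : Type*} [CommRing R] (m j : ℕ) :
    ∑ h ∈ range (m + 1), (-1 : R) ^ h * m.choose h * (h : R) ^ j
      = (-1) ^ m * m ! * stirlingSecond j m := by
  induction j generalizing m with
  | zero =>
    rcases m with _ | m
    · simp
    · simpa using congrArg (Int.cast (R := R)) (Int.alternating_sum_range_choose (n := m + 1))
  | succ j ih =>
    cases m with
    | zero => simp
    | succ m =>
      have hlast : ∑ h ∈ range (m + 1 + 1), (-1 : R) ^ h * m.choose h * (h : R) ^ j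
          = (-1) ^ m * m ! * stirlingSecond j m := by
        rw [sum_range_succ, Nat.choose_succ_self, ih]; simp
      calc ∑ h ∈ range (m + 1 + 1), (-1 : R) ^ h * (m + 1).choose h * (h : R) ^ (j + 1)
          = (m + 1) * ∑ h ∈ range (m + 1 + 1), (-1 : R) ^ h * (m + 1).choose h * (h : R) ^ j
            - (m + 1) * ∑ h ∈ range (m + 1 + 1), (-1 : R) ^ h * m.choose h * (h : R) ^ j := by
            rw [mul_sum, mul_sum, ← sum_sub_distrib]
            refine sum_congr rfl fun h hh => ?_
            have := mul_succ_choose_eq_succ_mul_sub (R := R) m h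
              (by simpa [Nat.lt_succ_iff] using hh)
            linear_combination (-1 : R) ^ h * (h : R) ^ j * this
        _ = (-1) ^ (m + 1) * (m + 1)! * stirlingSecond (j + 1) (m + 1) := by
            rw [ih, hlast, stirlingSecond_succ_succ]
            push_cast [factorial_succ]
            ring

theorem Nat.stirlingSecond_add_two_self_left (n : ℕ) :
    24 * stirlingSecond (n + 2) n = n * (n + 1) * (n + 2) * (3 * n + 1) := by
  induction n with
  | zero => rfl
  | succ n ih =>
    have hchoose : 2 * (n + 2).choose 2 = (n + 2) * (n + 1) := by
      rw [Nat.choose_two_right, Nat.mul_div_cancel' (Nat.even_mul_pred_self _).two_dvd]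
      rfl
    rw [stirlingSecond_succ_succ, stirlingSecond_succ_self_left]
    nlinarith [hchoose, ih]

namespace Multiset

theorem exists_sum_eq_card_add_two_mul {s : Multiset ℕ} (hs : ∀ x ∈ s, Odd x) :
    ∃ k, s.sum = card s + 2 * k := by
  induction s using Multiset.induction_on with
  | empty => exact ⟨0, rfl⟩
  | cons a s ih =>
    obtain ⟨c, rfl⟩ := hs a (mem_cons_self a s)
    obtain ⟨k, hk⟩ := ih fun x hx => hs x (mem_cons_of_mem hx)
    exact ⟨c + k, by rw [sum_cons, card_cons, hk]; ring⟩

theorem eq_replicate_one_of_sum_eq_card {s : Multiset ℕ} (hs : ∀ x ∈ s, 0 < x)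
    (h : s.sum = card s) : s = replicate (card s) 1 := by
  refine eq_replicate.2 ⟨rfl, fun b hb => ?_⟩
  obtain ⟨t, rfl⟩ := exists_cons_of_mem hb
  have ht : card t • 1 ≤ t.sum := card_nsmul_le_sum fun x hx => hs x (mem_cons_of_mem hx)
  have hb : 0 < b := hs b (mem_cons_self b t)
  rw [sum_cons, card_cons, smul_eq_mul, mul_one] at *
  omega

theorem eq_three_cons_replicate_one_of_sum_eq_card_add_two {s : Multiset ℕ}
    (hs : ∀ x ∈ s, Odd x) (h : s.sum = card s + 2) :
    s = 3 ::ₘ replicate (card s - 1) 1 := by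
  induction s using Multiset.induction_on with
  | empty => simp at h
  | cons a t ih =>
    have ht : ∀ x ∈ t, Odd x := fun x hx => hs x (mem_cons_of_mem hx)
    have hcard : card t • 1 ≤ t.sum := card_nsmul_le_sum fun x hx => (ht x hx).pos
    obtain ⟨c, rfl⟩ := hs a (mem_cons_self a t)
    rw [sum_cons, card_cons, smul_eq_mul, mul_one] at *
    rcases c with _ | _ | c
    · rw [ih ht (by omega), cons_swap]
      simp [replicate_succ]
    · rw [eq_replicate_one_of_sum_eq_card (fun x hx => (ht x hx).pos) (by omega)]
      simp
    · omega

end Multiset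

namespace Nat.Partition

@[simps]
def ones (n : ℕ) : n.Partition where
  parts := Multiset.replicate n 1
  parts_pos hi := by rw [Multiset.eq_of_mem_replicate hi]; exact one_pos
  parts_sum := by simp

@[simps]
def threeAddOnes (t : ℕ) : (t + 3).Partition where
  parts := 3 ::ₘ Multiset.replicate t 1
  parts_pos hi := by
    rcases Multiset.mem_cons.1 hi with rfl | hi
    · norm_num
    · rw [Multiset.eq_of_mem_replicate hi]; exact one_pos
  parts_sum := by rw [Multiset.sum_cons, Multiset.sum_replicate, smul_eq_mul, mul_one, add_comm]

theorem mem_odds_iff {n : ℕ} {J : n.Partition} : J ∈ odds n ↔ ∀ i ∈ J.parts, Odd i := by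
  simp [odds, restricted]

theorem ones_mem_odds (n : ℕ) : ones n ∈ odds n :=
  mem_odds_iff.2 fun i hi => by
    rw [ones_parts] at hi
    rw [Multiset.eq_of_mem_replicate hi]; exact odd_one

theorem threeAddOnes_mem_odds (t : ℕ) : threeAddOnes t ∈ odds (t + 3) :=
  mem_odds_iff.2 fun i hi => by
    rw [threeAddOnes_parts, Multiset.mem_cons] at hi
    rcases hi with rfl | hi
    · decide
    · rw [Multiset.eq_of_mem_replicate hi]; exact odd_one

theorem exists_card_parts_add_two_mul_of_mem_odds {n : ℕ} {J : n.Partition} (hJ : J ∈ odds n) :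
    ∃ k, Multiset.card J.parts + 2 * k = n := by
  obtain ⟨k, hk⟩ := Multiset.exists_sum_eq_card_add_two_mul (mem_odds_iff.1 hJ)
  exact ⟨k, hk ▸ J.parts_sum⟩

theorem eq_ones_of_card_parts_eq {n : ℕ} {J : n.Partition} (h : Multiset.card J.parts = n) :
    J = ones n := by
  ext1
  rw [Multiset.eq_replicate_one_of_sum_eq_card (fun x hx => J.parts_pos hx)
    (J.parts_sum.trans h.symm), h]
  rfl

theorem eq_threeAddOnes_of_card_parts_eq {t : ℕ} {J : (t + 3).Partition} (hJ : J ∈ odds (t + 3))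
    (h : Multiset.card J.parts = t + 1) : J = threeAddOnes t := by
  ext1
  rw [Multiset.eq_three_cons_replicate_one_of_sum_eq_card_add_two (mem_odds_iff.1 hJ)
    (by rw [J.parts_sum, h]), h]
  rfl

theorem sum_odds_eq_ones {M : Type*} [AddCommMonoid M] {n m : ℕ} (hn : n < m + 2)
    (F : n.Partition → M) (hF : ∀ J : n.Partition, Multiset.card J.parts < m → F J = 0) :
    ∑ J ∈ odds n, F J = F (ones n) := by
  refine sum_eq_single_of_mem _ (ones_mem_odds n) fun J hJ hne => hF J ?_
  obtain ⟨k, hk⟩ := exists_card_parts_add_two_mul_of_mem_odds hJ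
  by_contra hle
  exact hne (eq_ones_of_card_parts_eq (by omega))

theorem sum_odds_eq_ones_add_threeAddOnes {M : Type*} [AddCommMonoid M] {t : ℕ}
    (F : (t + 3).Partition → M)
    (hF : ∀ J : (t + 3).Partition, Multiset.card J.parts < t + 1 → F J = 0) :
    ∑ J ∈ odds (t + 3), F J = F (ones (t + 3)) + F (threeAddOnes t) := by
  have hne : ones (t + 3) ≠ threeAddOnes t := fun h => by
    have := congrArg (fun J : (t + 3).Partition => Multiset.card J.parts) h
    simp at this
    omega
  refine sum_eq_add_of_mem _ _ (ones_mem_odds _) (threeAddOnes_mem_odds t) hne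
    fun J hJ ⟨hJ1, hJ3⟩ => hF J ?_
  obtain ⟨k, hk⟩ := exists_card_parts_add_two_mul_of_mem_odds hJ
  by_contra hle
  rcases (by omega : Multiset.card J.parts = t + 3 ∨ Multiset.card J.parts = t + 1) with h | h
  · exact hJ1 (eq_ones_of_card_parts_eq h)
  · exact hJ3 (eq_threeAddOnes_of_card_parts_eq hJ h)

end Nat.Partition

theorem Ppoly_one (m : ℕ) : Ppoly 1 m = m / 2 := by
  induction m with
  | zero => simp [Ppoly]
  | succ m ih =>
    rw [Ppoly, ih, Ppoly]
    push_cast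
    field_simp
    ring

theorem Ppoly_two (m : ℕ) : Ppoly 2 m = m * (3 * m + 1) / 24 := by
  induction m with
  | zero => simp [Ppoly]
  | succ m ih =>
    rw [Ppoly, ih, Ppoly_one]
    push_cast
    field_simp
    ring

theorem alphaP_one {p : ℕ} (hp : p ≠ 1) : alphaP p 1 = 1 := by
  have hzero : ∀ d, d ≠ 1 → sigmaTerm 1 d = 0 := fun d hd => if_neg (by rwa [Nat.dvd_one])
  rw [alphaP, hzero 2 (by decide), hzero 4 (by decide), hzero p hp, hzero (2 * p) (by omega),
    hzero (4 * p) (by omega)]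
  simp [sigmaTerm, sigma1]

open Nat.Partition

theorem Wp_eq_prod_of_toFinset_subset (p : ℕ) {N : ℕ} (J : N.Partition) {s : Finset ℕ}
    (hs : J.parts.toFinset ⊆ s) : Wp p J = ∏ k ∈ s, alphaP p k ^ mult J k / (mult J k)! := by
  refine prod_subset hs fun k _ hk => ?_
  rw [mult, Multiset.count_eq_zero.2 (by simpa using hk)]
  simp

theorem Wp_ones (p n : ℕ) : Wp p (ones n) = alphaP p 1 ^ n / n ! := by
  rw [Wp_eq_prod_of_toFinset_subset p _ (s := {1})]
  · simp [mult]
  · intro k hk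
    simpa using Multiset.eq_of_mem_replicate (Multiset.mem_toFinset.1 hk)

theorem Wp_threeAddOnes (p t : ℕ) :
    Wp p (threeAddOnes t) = alphaP p 3 * (alphaP p 1 ^ t / t !) := by
  rw [Wp_eq_prod_of_toFinset_subset p _ (s := {3, 1}), prod_pair (by decide)]
  · simp [mult, Multiset.count_replicate]
  · intro k hk
    simp only [threeAddOnes_parts, Multiset.toFinset_cons, Finset.mem_insert,
      Multiset.mem_toFinset] at hk
    rcases hk with rfl | hk
    · simp
    · simp [Multiset.eq_of_mem_replicate hk]

theorem normJ_ones (n : ℕ) : normJ (ones n) = n := by simp [normJ]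

theorem normJ_threeAddOnes (t : ℕ) : normJ (threeAddOnes t) = t + 1 := by simp [normJ]

theorem evenJ_eq_zero_iff {N : ℕ} (J : N.Partition) :
    evenJ J = 0 ↔ ∀ i ∈ J.parts, ¬Even i := by
  simp [evenJ, Multiset.filter_eq_nil]

theorem oddJ_eq_normJ {N : ℕ} {J : N.Partition} (h : ∀ i ∈ J.parts, ¬Even i) :
    oddJ J = normJ J := by
  rw [oddJ, normJ, Multiset.filter_eq_self.2 fun i hi => Nat.not_even_iff_odd.1 (h i hi)]

theorem alternating_sum_bP_eq_sum_odds (p n m l : ℕ) :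
    ∑ h ∈ range (m + 1), (-1 : ℚ) ^ ((h : ℤ) - 1) * m.choose h * bP p n l (2 * h) 0
      = -((-1) ^ (m + l) * m ! * ∑ J ∈ odds l,
          (2 * n : ℚ) ^ normJ J * Wp p J * (normJ J).stirlingSecond m) := by
  have hsign : ∀ h : ℕ, (-1 : ℚ) ^ ((h : ℤ) - 1) = -(-1) ^ h := fun h => by
    rw [zpow_sub_one₀ (by norm_num), zpow_natCast]; norm_num
  simp only [bP, mul_sum]
  rw [sum_comm, odds, restricted, sum_filter, ← sum_neg_distrib]
  refine sum_congr rfl fun J _ => ?_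
  split_ifs with hJ
  · obtain ⟨k, hk⟩ := exists_card_parts_add_two_mul_of_mem_odds
      (mem_odds_iff.2 fun i hi => Nat.not_even_iff_odd.1 (hJ i hi))
    have hparity : (-1 : ℚ) ^ l = (-1) ^ normJ J :=
      calc (-1 : ℚ) ^ l = (-1) ^ (normJ J + 2 * k) := by rw [normJ, hk]
        _ = (-1) ^ normJ J := by rw [pow_add, pow_mul, neg_one_sq, one_pow, mul_one]
    rw [(evenJ_eq_zero_iff J).2 hJ, oddJ_eq_normJ hJ]
    calc ∑ h ∈ range (m + 1), (-1 : ℚ) ^ ((h : ℤ) - 1) * m.choose h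
            * ((-n : ℚ) ^ normJ J * (2 * h) ^ normJ J * 0 ^ 0 * Wp p J)
        = -((-n : ℚ) ^ normJ J * 2 ^ normJ J * Wp p J) *
            ∑ h ∈ range (m + 1), (-1 : ℚ) ^ h * m.choose h * (h : ℚ) ^ normJ J := by
          rw [mul_sum]
          refine sum_congr rfl fun h _ => ?_
          rw [hsign, mul_pow]
          ring
      _ = _ := by
          rw [sum_range_neg_one_pow_mul_choose_mul_pow, neg_pow (n : ℚ), pow_add, hparity]
          ring
  · have hne : evenJ J ≠ 0 := fun h => hJ ((evenJ_eq_zero_iff J).1 h)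
    simp [zero_pow hne]

theorem first_three_components_general (p : ℕ) (hp : p.Prime)
    (n : ℕ) (m : ℕ) (hm : 1 ≤ m) :
    (∑ h ∈ Finset.range (m + 1),
        (-1 : ℚ) ^ ((h : ℤ) - 1) * (m.choose h) * bP p n m (2 * (h : ℚ)) 0
      = -(2 * (n : ℚ)) ^ m)
    ∧ (∑ h ∈ Finset.range (m + 1),
        (-1 : ℚ) ^ ((h : ℤ) - 1) * (m.choose h) * bP p n (m + 1) (2 * (h : ℚ)) 0
      = (2 * (n : ℚ)) ^ (m + 1) * Ppoly 1 m)
    ∧ (∑ h ∈ Finset.range (m + 1),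
        (-1 : ℚ) ^ ((h : ℤ) - 1) * (m.choose h) * bP p n (m + 2) (2 * (h : ℚ)) 0
      = -((2 * (n : ℚ)) ^ (m + 2) * Ppoly 2 m + (2 * (n : ℚ)) ^ m * m * alphaP p 3)) := by
  have hF : ∀ (l : ℕ) (J : l.Partition), Multiset.card J.parts < m →
      (2 * n : ℚ) ^ normJ J * Wp p J * (normJ J).stirlingSecond m = 0 := fun l J hJ => by
    simp [normJ, stirlingSecond_eq_zero_of_lt hJ]
  have hα : alphaP p 1 = 1 := alphaP_one hp.ne_one
  simp only [alternating_sum_bP_eq_sum_odds]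
  refine ⟨?_, ?_, ?_⟩
  · rw [sum_odds_eq_ones (by omega) _ (hF _), normJ_ones, Wp_ones, hα, one_pow,
      stirlingSecond_self, (Even.add_self m).neg_one_pow]
    push_cast
    field_simp
  · rw [sum_odds_eq_ones (by omega) _ (hF _), normJ_ones, Wp_ones, hα,
      stirlingSecond_succ_self_left, Nat.cast_choose_two, Ppoly_one, factorial_succ,
      Odd.neg_one_pow ⟨m, by ring⟩]
    push_cast
    field_simp
    ring
  · obtain ⟨t, rfl⟩ : ∃ t, m = t + 1 := ⟨m - 1, by omega⟩
    have hS : (24 * stirlingSecond (t + 3) (t + 1) : ℚ)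
        = (t + 1) * (t + 2) * (t + 3) * (3 * t + 4) := by
      exact_mod_cast stirlingSecond_add_two_self_left (t + 1)
    rw [show t + 1 + 2 = t + 3 from rfl, sum_odds_eq_ones_add_threeAddOnes _ (hF _), normJ_ones,
      Wp_ones, normJ_threeAddOnes, Wp_threeAddOnes, hα, one_pow, stirlingSecond_self, Ppoly_two,
      Even.neg_one_pow ⟨t + 2, by ring⟩]
    simp only [factorial_succ]
    push_cast
    field_simp
    linear_combination -(2 * n : ℚ) ^ (t + 3) * hS

theorem first_three_components (p : ℕ) (hp : p.Prime) (hpodd : Odd p)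
    (n : ℕ) (hn : 0 < n) (m : ℕ) (hm : 1 ≤ m) :
    (∑ h ∈ Finset.range (m + 1),
        (-1 : ℚ) ^ ((h : ℤ) - 1) * (m.choose h) * bP p n m (2 * (h : ℚ)) 0
      = -(2 * (n : ℚ)) ^ m)
    ∧ (∑ h ∈ Finset.range (m + 1),
        (-1 : ℚ) ^ ((h : ℤ) - 1) * (m.choose h) * bP p n (m + 1) (2 * (h : ℚ)) 0
      = (2 * (n : ℚ)) ^ (m + 1) * Ppoly 1 m)
    ∧ (∑ h ∈ Finset.range (m + 1),
        (-1 : ℚ) ^ ((h : ℤ) - 1) * (m.choose h) * bP p n (m + 2) (2 * (h : ℚ)) 0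
      = -((2 * (n : ℚ)) ^ (m + 2) * Ppoly 2 m + (2 * (n : ℚ)) ^ m * m * alphaP p 3)) :=
  first_three_components_general p hp n m hm
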